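/- arXiv:1810.10055 — 3 statements merged into one kernel-verified Lean document; each statement's English description precedes it below -/
import Mathlib

section
/- For every finite simple graph G, the complement of the Booth–Lueker graph BL(G) is chordal. -/
/-!
The complement of `BL(G)` is a split graph: the edge-vertices form a clique and the original
vertices an independent set. Split graphs are chordal: no two consecutive vertices of a cycle lie
in the independent set, so among the first five vertices of a cycle of length at least four there
are two clique vertices two steps apart, and the edge joining them is a chord.
-/

/-- The Booth–Lueker graph of `G`: vertex set `V(G) ⊕ E(G)`, with all pairs of distinct
original vertices adjacent, and each edge-vertex `e` adjacent to the endpoints of `e`. -/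
def BoothLueker {V : Type*} (G : SimpleGraph V) : SimpleGraph (V ⊕ G.edgeSet) where
  Adj x y :=
    match x, y with
    | Sum.inl u, Sum.inl v => u ≠ v
    | Sum.inl u, Sum.inr e => u ∈ (e : Sym2 V)
    | Sum.inr e, Sum.inl u => u ∈ (e : Sym2 V)
    | Sum.inr _, Sum.inr _ => False
  symm := ⟨by rintro (u | e) (v | f) h <;> simp_all <;> exact Ne.symm h⟩
  loopless := ⟨by rintro (u | e) h <;> simp_all⟩

/-- A cycle `c` in `G` has a chord if two vertices on the cycle are adjacent in `G`
by an edge that is not an edge of the cycle. -/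
def HasChord {V : Type*} (G : SimpleGraph V) {v : V} (c : G.Walk v v) : Prop :=
  ∃ u w, u ∈ c.support ∧ w ∈ c.support ∧ G.Adj u w ∧ ¬ c.toSubgraph.Adj u w

/-- A graph is chordal if every cycle of length greater than three has a chord. -/
def IsChordalGraph {V : Type*} (G : SimpleGraph V) : Prop :=
  ∀ ⦃v : V⦄ (c : G.Walk v v), c.IsCycle → 3 < c.length → HasChord G c

namespace SimpleGraph.Walk.IsCycle

variable {W : Type*} {G : SimpleGraph W} {u : W} {c : G.Walk u u}

theorem getVert_eq_getVert (hc : c.IsCycle) {a b : ℕ} (ha : a ≤ c.length) (hb : b ≤ c.length)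
    (h : c.getVert a = c.getVert b) :
    a = b ∨ a = 0 ∧ b = c.length ∨ a = c.length ∧ b = 0 := by
  have := hc.three_le_length
  by_cases hpos : 1 ≤ a ∧ 1 ≤ b
  · exact .inl <| hc.getVert_injOn ⟨hpos.1, ha⟩ ⟨hpos.2, hb⟩ h
  by_cases hlt : a ≤ c.length - 1 ∧ b ≤ c.length - 1
  · exact .inl <| hc.getVert_injOn' hlt.1 hlt.2 h
  omega

theorem getVert_ne_getVert_add_two (hc : c.IsCycle) (hlen : 3 < c.length) {i : ℕ}
    (hi : i + 2 ≤ c.length) : c.getVert i ≠ c.getVert (i + 2) := by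
  intro h
  have := hc.getVert_eq_getVert (by omega) hi h
  omega

theorem not_toSubgraph_adj_getVert_add_two (hc : c.IsCycle) (hlen : 3 < c.length) {i : ℕ}
    (hi : i + 2 ≤ c.length) : ¬ c.toSubgraph.Adj (c.getVert i) (c.getVert (i + 2)) := by
  rw [toSubgraph_adj_iff]
  rintro ⟨j, hedge, hj⟩
  rcases Sym2.eq_iff.mp hedge with ⟨h₁, h₂⟩ | ⟨h₁, h₂⟩
  · have := hc.getVert_eq_getVert hj.le (by omega) h₁
    have := hc.getVert_eq_getVert (by omega : j + 1 ≤ c.length) hi h₂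
    omega
  · have := hc.getVert_eq_getVert hj.le hi h₁
    have := hc.getVert_eq_getVert (by omega : j + 1 ≤ c.length) (by omega) h₂
    omega

end SimpleGraph.Walk.IsCycle


theorem IsChordalGraph.of_isClique_of_isIndepSet_compl {W : Type*} {G : SimpleGraph W}
    {K : Set W} (hK : G.IsClique K) (hKc : G.IsIndepSet Kᶜ) : IsChordalGraph G := by
  intro v c hc hlen
  have hcover : ∀ j < c.length, c.getVert j ∈ K ∨ c.getVert (j + 1) ∈ K := by
    intro j hj
    by_contra! h
    exact hKc h.1 h.2 (c.adj_getVert_succ hj).ne (c.adj_getVert_succ hj)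
  obtain ⟨i, hi, hiK, hi2K⟩ : ∃ i ≤ 2, c.getVert i ∈ K ∧ c.getVert (i + 2) ∈ K := by
    have := hcover 0 (by omega)
    have := hcover 1 (by omega)
    have := hcover 2 (by omega)
    have := hcover 3 (by omega)
    by_cases h02 : c.getVert 0 ∈ K ∧ c.getVert 2 ∈ K
    · exact ⟨0, by omega, h02⟩
    by_cases h13 : c.getVert 1 ∈ K ∧ c.getVert 3 ∈ K
    · exact ⟨1, by omega, h13⟩
    exact ⟨2, le_rfl, by tauto, by tauto⟩
  have hne := hc.getVert_ne_getVert_add_two hlen (by omega : i + 2 ≤ c.length)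
  exact ⟨_, _, c.getVert_mem_support i, c.getVert_mem_support (i + 2), hK hiK hi2K hne,
    hc.not_toSubgraph_adj_getVert_add_two hlen (by omega)⟩

theorem boothLueker_compl_isChordal_general {V : Type*} (G : SimpleGraph V) :
    IsChordalGraph (BoothLueker G)ᶜ := by
  refine IsChordalGraph.of_isClique_of_isIndepSet_compl (K := Set.range Sum.inr) ?_ ?_
  · rintro _ ⟨e, rfl⟩ _ ⟨f, rfl⟩ hne
    exact ⟨hne, id⟩
  · rintro (u | e) hu (w | f) hw hne
    · exact fun h => h.2 fun huw => hne (congrArg Sum.inl huw)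
    · exact absurd ⟨f, rfl⟩ hw
    · exact absurd ⟨e, rfl⟩ hu
    · exact absurd ⟨e, rfl⟩ hu

/-- For every finite simple graph `G`, the complement of the Booth–Lueker graph
`BL(G)` is chordal. -/
theorem boothLueker_compl_isChordal {V : Type*} [Fintype V] (G : SimpleGraph V) :
    IsChordalGraph (BoothLueker G)ᶜ :=
  boothLueker_compl_isChordal_general G
end

section
/- Let G be a finite simple graph on n vertices with degree vector (d_0,...,d_{n-1}), and for a set W of i+1 vertices of BL(G), let c(W) be the number of connected components of the induced subgraph of the complement of BL(G) on W. Then Σ_W (c(W) − 1), summed over all (i+1)-subsets W, equals i*binom(n, i+1) + Σ_{k=1}^{i} Σ_{j=1}^{n} d_{j-1} binom(j-1, k) binom(n-1, i-k). -/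
/-!
In the complement of `BL(G)` the vertex-vertices are pairwise non-adjacent, the edge-vertices
form a clique, and a vertex `v` is adjacent to an edge `e` iff `v ∉ e`. So if `W` contains an
edge-vertex, the components of the induced graph are the vertices of `W` lying on every edge of
`W` (each isolated), plus one component containing everything else; if `W` contains no edge,
all its points are isolated. Hence `∑_W (c(W) - 1)` counts the pairs `(v, W)` with `v` such a
common endpoint, minus `binom(n, i+1)`. For fixed `v` these `W` are `v` together with an
`i`-subset of the other `n - 1` vertices and the `deg v` edges at `v`; Vandermonde splits
`binom(n - 1 + deg v, i)` by the number `k` of edges, and the `k = 0` terms add up to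
`n binom(n - 1, i) = (i + 1) binom(n, i + 1)`.
-/

open Finset

lemma Nat.mul_choose_sub_one (n k : ℕ) : n * (n - 1).choose k = (k + 1) * n.choose (k + 1) := by
  cases n with
  | zero => simp
  | succ n => rw [add_tsub_cancel_right, Nat.add_one_mul_choose_eq, mul_comm]

namespace Finset

lemma card_filter_powersetCard_mem {α : Type*} [DecidableEq α] {s : Finset α} {a : α}
    (ha : a ∈ s) (k : ℕ) : #{W ∈ powersetCard (k + 1) s | a ∈ W} = (#s - 1).choose k := by
  simpa using card_filter_powersetCard_subset {a} s (k + 1) (by simpa) (by simp)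

lemma card_filter_powersetCard_toRight_eq_empty {α β : Type*} [Fintype α] [Fintype β]
    [DecidableEq β] (k : ℕ) :
    #{W ∈ powersetCard k (univ : Finset (α ⊕ β)) | W.toRight = ∅} =
      (Fintype.card α).choose k := by
  have h : {W ∈ powersetCard k (univ : Finset (α ⊕ β)) | W.toRight = ∅} =
      powersetCard k (univ.map .inl) := by
    ext W
    simp [toRight_eq_empty, and_comm]
  rw [h, card_powersetCard, card_map, card_univ]

lemma sum_comp_eq_sum_Icc {α M : Type*} [AddCommMonoid M] (s : Finset α) (g : α → ℕ) (n : ℕ)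
    (hg : ∀ a ∈ s, g a < n) (f : ℕ → M) :
    ∑ a ∈ s, f (g a) = ∑ j ∈ Icc 1 n, #{a ∈ s | g a = j - 1} • f (j - 1) := by
  rw [← sum_fiberwise_of_maps_to (fun a ha => mem_range.2 (hg a ha)), ← Ico_add_one_right_eq_Icc,
    sum_Ico_eq_sum_range, add_tsub_cancel_right]
  refine sum_congr rfl fun m _ => ?_
  rw [add_tsub_cancel_left, ← sum_const]
  exact sum_congr rfl fun a ha => by rw [(mem_filter.1 ha).2]

end Finset

namespace SimpleGraph

section Components

variable {X : Type*} {H : SimpleGraph X}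

lemma Reachable.eq_of_forall_not_adj {x y : X} (h : H.Reachable x y) (hx : ∀ z, ¬ H.Adj x z) :
    x = y := by
  obtain ⟨w⟩ := h
  cases w with
  | nil => rfl
  | cons hadj _ => exact absurd hadj (hx _)

lemma card_connectedComponent_of_forall_not_adj (h : ∀ x y, ¬ H.Adj x y) :
    Nat.card H.ConnectedComponent = Nat.card X :=
  (Nat.card_eq_of_bijective H.connectedComponentMk
    ⟨fun x _ hxy => (ConnectedComponent.exact hxy).eq_of_forall_not_adj (h x),
      Quot.mk_surjective⟩).symm

lemma card_connectedComponent_eq_card_add_one [Finite X] (I : Set X) (s : X)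
    (hI : ∀ x ∈ I, ∀ z, ¬ H.Adj x z) (hs : s ∉ I) (hreach : ∀ x ∉ I, H.Reachable x s) :
    Nat.card H.ConnectedComponent = Nat.card I + 1 := by
  rw [← Finite.card_option]
  refine (Nat.card_eq_of_bijective
    (fun o => o.elim (H.connectedComponentMk s) (fun x => H.connectedComponentMk x.1))
    ⟨?_, ?_⟩).symm
  · rintro (_ | ⟨x, hx⟩) (_ | ⟨y, hy⟩) hxy
    · rfl
    · cases hs ((ConnectedComponent.exact hxy.symm).eq_of_forall_not_adj (hI y hy) ▸ hy)
    · cases hs ((ConnectedComponent.exact hxy).eq_of_forall_not_adj (hI x hx) ▸ hx)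
    · exact congrArg some (Subtype.ext
        ((ConnectedComponent.exact hxy).eq_of_forall_not_adj (hI x hx)))
  · intro c
    induction c using ConnectedComponent.ind with | h y => ?_
    by_cases hy : y ∈ I
    · exact ⟨some ⟨y, hy⟩, rfl⟩
    · exact ⟨none, (ConnectedComponent.sound (hreach y hy)).symm⟩

end Components

variable {V : Type*} [Fintype V] (G : SimpleGraph V) [DecidableRel G.Adj]

lemma card_filter_edgeSet_mem_eq_degree [DecidableEq V] (v : V) :
    #{e : G.edgeSet | v ∈ (e : Sym2 V)} = G.degree v := by
  rw [← G.card_incidenceFinset_eq_degree, ← card_map (Function.Embedding.subtype _)]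
  congr 1
  ext e
  simp [incidenceSet, and_comm]

lemma sum_choose_card_sub_one_add_degree (i : ℕ) :
    ∑ v, (Fintype.card V - 1 + G.degree v).choose i =
      Fintype.card V * (Fintype.card V - 1).choose i +
        ∑ k ∈ Icc 1 i, ∑ j ∈ Icc 1 (Fintype.card V),
          #{v | G.degree v = j - 1} * (j - 1).choose k * (Fintype.card V - 1).choose (i - k) := by
  have vandermonde (v : V) : (Fintype.card V - 1 + G.degree v).choose i =
      ∑ k ∈ range (i + 1), (G.degree v).choose k * (Fintype.card V - 1).choose (i - k) := by
    rw [add_comm, Nat.add_choose_eq, Nat.sum_antidiagonal_eq_sum_range_succ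
      (fun a b => (G.degree v).choose a * (Fintype.card V - 1).choose b)]
  simp_rw [vandermonde]
  rw [sum_comm, range_eq_Ico, sum_eq_sum_Ico_succ_bot (Nat.succ_pos i), zero_add,
    Nat.succ_eq_add_one, Ico_add_one_right_eq_Icc]
  congr 1
  · simp
  · refine sum_congr rfl fun k _ => ?_
    rw [← sum_mul, sum_comp_eq_sum_Icc univ (fun v => G.degree v) _
      (fun v _ => G.degree_lt_card_verts v) (·.choose k), sum_mul]
    simp

end SimpleGraph

open SimpleGraph

namespace BoothLueker

variable {V : Type*} (G : SimpleGraph V)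

lemma compl_adj_inl_inl (u v : V) : ¬ (BoothLueker G)ᶜ.Adj (.inl u) (.inl v) := by
  simp [BoothLueker]

lemma compl_adj_inl_inr (u : V) (e : G.edgeSet) :
    (BoothLueker G)ᶜ.Adj (.inl u) (.inr e) ↔ u ∉ (e : Sym2 V) := by
  simp [BoothLueker]

lemma compl_adj_inr_inr (e f : G.edgeSet) :
    (BoothLueker G)ᶜ.Adj (.inr e) (.inr f) ↔ e ≠ f := by
  simp [BoothLueker]

variable [DecidableEq V]

def commonEndpoints (W : Finset (V ⊕ G.edgeSet)) : Finset V :=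
  {v ∈ W.toLeft | ∀ e ∈ W.toRight, v ∈ (e : Sym2 V)}

variable {G} in
lemma mem_commonEndpoints {W : Finset (V ⊕ G.edgeSet)} {v : V} :
    v ∈ commonEndpoints G W ↔ .inl v ∈ W ∧ ∀ e ∈ W.toRight, v ∈ (e : Sym2 V) := by
  simp [commonEndpoints]

lemma card_connectedComponent_induce_compl (W : Finset (V ⊕ G.edgeSet)) :
    Nat.card ((BoothLueker G)ᶜ.induce (W : Set (V ⊕ G.edgeSet))).ConnectedComponent =
      #(commonEndpoints G W) + if W.toRight = ∅ then 0 else 1 := by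
  set H := (BoothLueker G)ᶜ.induce (W : Set (V ⊕ G.edgeSet))
  rcases W.toRight.eq_empty_or_nonempty with hR | ⟨e₀, he₀⟩
  · have hno : ∀ x y, ¬ H.Adj x y := by
      have hW : ∀ e : G.edgeSet, .inr e ∉ W := fun e he => by simpa [hR] using mem_toRight.2 he
      rintro ⟨u | e, hx⟩ ⟨w | f, hy⟩ h
      · exact compl_adj_inl_inl G u w h
      · exact hW f hy
      all_goals exact hW e hx
    rw [card_connectedComponent_of_forall_not_adj hno, if_pos hR, add_zero, Nat.card_coe_set_eq,
      Set.ncard_coe_finset, ← card_toLeft_add_card_toRight, commonEndpoints, hR,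
      filter_true_of_mem (by simp), card_empty, add_zero]
  · set S := commonEndpoints G W
    have hSW : ∀ {x}, x ∈ S.map .inl → x ∈ (W : Set (V ⊕ G.edgeSet)) := by
      intro x hx
      obtain ⟨v, hv, rfl⟩ := mem_map.1 hx
      exact (mem_commonEndpoints.1 hv).1
    have reachable_inr (e : G.edgeSet) (he : .inr e ∈ W) :
        H.Reachable ⟨.inr e, he⟩ ⟨.inr e₀, mem_toRight.1 he₀⟩ := by
      by_cases h : e = e₀
      · subst h; rfl
      · exact Adj.reachable ((compl_adj_inr_inr G e e₀).2 h)
    rw [card_connectedComponent_eq_card_add_one {x | x.1 ∈ S.map .inl}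
        ⟨.inr e₀, mem_toRight.1 he₀⟩, Set.coe_ofPred,
      Nat.card_congr (Equiv.subtypeSubtypeEquivSubtype hSW), Nat.card_eq_finsetCard, card_map,
      if_neg (nonempty_iff_ne_empty.1 ⟨e₀, he₀⟩)]
    · rintro ⟨x, hx⟩ hxS
      obtain ⟨v, hv, rfl⟩ := mem_map.1 hxS
      rintro ⟨u | e, hy⟩ hxy
      · exact compl_adj_inl_inl G _ _ hxy
      · exact (compl_adj_inl_inr G v e).1 hxy ((mem_commonEndpoints.1 hv).2 e (mem_toRight.2 hy))
    · simp
    · rintro ⟨u | e, hx⟩ hxS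
      · obtain ⟨e, he, hue⟩ : ∃ e ∈ W.toRight, u ∉ (e : Sym2 V) := by
          by_contra! h
          exact hxS (mem_map_of_mem Function.Embedding.inl (mem_commonEndpoints.2 ⟨hx, h⟩))
        have hadj : H.Adj ⟨.inl u, hx⟩ ⟨.inr e, mem_toRight.1 he⟩ :=
          (compl_adj_inl_inr G u e).2 hue
        exact hadj.reachable.trans (reachable_inr e (mem_toRight.1 he))
      · exact reachable_inr e hx

variable [Fintype V] [DecidableRel G.Adj]

lemma card_filter_powersetCard_mem_commonEndpoints (i : ℕ) (v : V) :
    #{W ∈ powersetCard (i + 1) (univ : Finset (V ⊕ G.edgeSet)) | v ∈ commonEndpoints G W} =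
      (Fintype.card V - 1 + G.degree v).choose i := by
  set T : Finset (V ⊕ G.edgeSet) := (univ : Finset V).disjSum {e : G.edgeSet | v ∈ (↑e : Sym2 V)}
  have hT : {W ∈ powersetCard (i + 1) (univ : Finset (V ⊕ G.edgeSet)) |
      v ∈ commonEndpoints G W} = {W ∈ powersetCard (i + 1) T | .inl v ∈ W} := by
    ext W
    simp [T, mem_commonEndpoints, subset_iff, Sum.forall]
    tauto
  have hv : 0 < Fintype.card V := Fintype.card_pos_iff.2 ⟨v⟩
  rw [hT, card_filter_powersetCard_mem (by simp [T]), card_disjSum, card_univ,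
    G.card_filter_edgeSet_mem_eq_degree]
  congr 1
  omega

lemma sum_card_commonEndpoints (i : ℕ) :
    ∑ W ∈ powersetCard (i + 1) (univ : Finset (V ⊕ G.edgeSet)), #(commonEndpoints G W) =
      ∑ v, (Fintype.card V - 1 + G.degree v).choose i := by
  have h := sum_card_bipartiteAbove_eq_sum_card_bipartiteBelow (s := powersetCard (i + 1) univ)
    (t := univ) (r := fun W v => v ∈ commonEndpoints G W)
  simpa only [bipartiteAbove, bipartiteBelow, filter_mem_eq_inter, univ_inter,
    card_filter_powersetCard_mem_commonEndpoints] using h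

end BoothLueker

open BoothLueker

/-- For every `(i+1)`-subset `W` of the vertices of `BL(G)`, let `c(W)` be the number of
connected components of the induced subgraph of the complement of `BL(G)` on `W`.  Then
`∑_W (c(W) − 1) = i·binom(n, i+1) + ∑_{k=1}^{i} ∑_{j=1}^{n} d_{j-1} binom(j-1, k) binom(n-1, i-k)`. -/
theorem sum_components_boothLueker {V : Type*} [Fintype V] [DecidableEq V]
    (G : SimpleGraph V) [DecidableRel G.Adj]
    (n : ℕ) (hn : n = Fintype.card V)
    (d : ℕ → ℕ)
    (hd : ∀ k, d k = (Finset.univ.filter fun v => G.degree v = k).card)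
    (i : ℕ) :
    ∑ W ∈ Finset.powersetCard (i + 1) (Finset.univ : Finset (V ⊕ G.edgeSet)),
        ((Nat.card (SimpleGraph.induce (↑W) ((BoothLueker G)ᶜ)).ConnectedComponent : ℤ) - 1)
      = (i : ℤ) * (n.choose (i + 1) : ℤ)
        + ∑ k ∈ Finset.Icc 1 i, ∑ j ∈ Finset.Icc 1 n,
            (d (j - 1) : ℤ) * ((j - 1).choose k : ℤ) * ((n - 1).choose (i - k) : ℤ) := by
  subst hn
  have components_sub_one (W : Finset (V ⊕ G.edgeSet)) :
      (Nat.card ((BoothLueker G)ᶜ.induce (W : Set (V ⊕ G.edgeSet))).ConnectedComponent : ℤ) - 1 =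
        #(commonEndpoints G W) - if W.toRight = ∅ then 1 else 0 := by
    rw [card_connectedComponent_induce_compl]
    split_ifs <;> push_cast <;> ring
  rw [sum_congr rfl fun W _ => components_sub_one W, sum_sub_distrib, ← Nat.cast_sum,
    sum_card_commonEndpoints, G.sum_choose_card_sub_one_add_degree, sum_boole,
    card_filter_powersetCard_toRight_eq_empty]
  simp only [hd]
  push_cast [Nat.mul_choose_sub_one]
  ring
end

section
/- Let G be a graph with n vertices and m edges. The Boij–Söderberg coefficients c_i of the edge ideal of the complement of BL(G) satisfy: c_i = 0 for i < m; c_i = m/(i(i+1)) for m ≤ i ≤ m+n−4; c_{m+n−3} = m/(m+n−3); and c_i = 0 for i > m+n−3. -/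
/-!
Splitting `C(j+1, i+1) / j = C(j-1, i) / (i+1) + C(j-1, i-1) / i` expresses every `c_i` with
`i ≥ 1` through the alternating moments `μ_k = ∑_j (-1)^(j-1) β_j C(j-1, k)`. Pascal's rule and
the orthogonality `∑_s (-1)^s C(n, s) C(s, k) = (-1)^n [k = n]` give the moments of
`j ↦ C(N, j)` and `j ↦ C(m, j+1)` as `(-1)^k [k < N]` and `(-1)^k (m-1-k)₊`. Hence, with
`N = m+n-3`, `μ_k = (-1)^k w_k` where `w_k = min(k+1, m)` for `k < N` and `w_k = 0` otherwise,
and `c_i = w_{i-1} / i - w_i / (i+1)` can be read off on each range. The bound `m ≤ C(n, 2)`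
forces `n ≥ 3` unless `m = 0` or `(m, n) = (1, 2)`, and in those two cases all `β_j` vanish.
-/

open Finset

section AlternatingChooseSums

variable {R : Type*} [CommRing R]

theorem sum_range_neg_one_pow_mul_choose_mul_choose {n L : ℕ} (hnL : n < L) (k : ℕ) :
    ∑ s ∈ range L, (-1 : R) ^ s * n.choose s * s.choose k = if k = n then (-1) ^ n else 0 := by
  rw [eventually_constant_sum (fun s hs => by simp [Nat.choose_eq_zero_of_lt hs]) hnL]
  rcases lt_or_ge n k with hnk | hkn
  · rw [if_neg hnk.ne']
    exact sum_eq_zero fun s hs => by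
      simp [Nat.choose_eq_zero_of_lt ((mem_range_succ_iff.1 hs).trans_lt hnk)]
  obtain ⟨d, rfl⟩ := Nat.exists_eq_add_of_le hkn
  have hchoose (t : ℕ) :
      (k + d).choose (k + t) * (k + t).choose k = (k + d).choose k * d.choose t := by
    rw [Nat.choose_mul (Nat.le_add_right k t)]
    simp
  have halt := congrArg (Int.cast : ℤ → R) (Int.alternating_sum_range_choose (n := d))
  push_cast at halt
  rw [Nat.succ_eq_add_one, add_assoc, sum_range_add, sum_eq_zero fun s hs => by
    simp [Nat.choose_eq_zero_of_lt (mem_range.1 hs)], zero_add]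
  calc ∑ t ∈ range (d + 1), (-1 : R) ^ (k + t) * (k + d).choose (k + t) * (k + t).choose k
      = (-1) ^ k * (k + d).choose k * ∑ t ∈ range (d + 1), (-1 : R) ^ t * d.choose t := by
        rw [mul_sum]
        refine sum_congr rfl fun t _ => ?_
        rw [pow_add, mul_assoc, ← Nat.cast_mul, hchoose, Nat.cast_mul]
        ring
    _ = _ := by
        rw [halt]
        rcases d with _ | d <;> simp

theorem sum_range_neg_one_pow_mul_choose_succ_mul_choose {N L : ℕ} (hNL : N ≤ L) (k : ℕ) :
    ∑ s ∈ range L, (-1 : R) ^ s * N.choose (s + 1) * s.choose k =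
      if k < N then (-1) ^ k else 0 := by
  induction N with
  | zero => simp
  | succ N ih =>
    simp only [Nat.choose_succ_succ, Nat.cast_add, mul_add, add_mul, sum_add_distrib,
      sum_range_neg_one_pow_mul_choose_mul_choose (R := R) hNL, ih (Nat.le_of_succ_le hNL)]
    rcases lt_trichotomy k N with hk | rfl | hk
    · simp [hk, hk.ne, Nat.lt_succ_of_lt hk]
    · simp
    · simp [hk.ne', hk.not_gt, Nat.not_lt.2 (Nat.succ_le_of_lt hk)]

theorem sum_range_neg_one_pow_mul_choose_add_two_mul_choose {M L : ℕ} (hML : M ≤ L) (k : ℕ) :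
    ∑ s ∈ range L, (-1 : R) ^ s * M.choose (s + 2) * s.choose k =
      (-1) ^ k * ((M - 1 - k : ℕ) : R) := by
  induction M with
  | zero => simp
  | succ M ih =>
    simp only [Nat.choose_succ_succ, Nat.cast_add, mul_add, add_mul, sum_add_distrib,
      sum_range_neg_one_pow_mul_choose_succ_mul_choose (R := R) (Nat.le_of_succ_le hML),
      ih (Nat.le_of_succ_le hML)]
    split_ifs with hk
    · rw [show M + 1 - 1 - k = M - 1 - k + 1 by omega]
      push_cast
      ring
    · rw [Nat.sub_eq_zero_of_le (by omega : M - 1 ≤ k),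
        Nat.sub_eq_zero_of_le (by omega : M + 1 - 1 ≤ k)]
      simp

end AlternatingChooseSums

theorem cast_choose_add_two_div {K : Type*} [Field K] [CharZero K] (s r : ℕ) :
    ((s + 2).choose (r + 2) : K) / (s + 1) = s.choose (r + 1) / (r + 2) + s.choose r / (r + 1) := by
  have h1 := congrArg (Nat.cast : ℕ → K) (Nat.add_one_mul_choose_eq s r)
  have h2 := congrArg (Nat.cast : ℕ → K) (Nat.add_one_mul_choose_eq s (r + 1))
  have h3 := congrArg (Nat.cast : ℕ → K) (Nat.choose_succ_succ' (s + 1) (r + 1))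
  push_cast at h1 h2 h3
  have hs : (s : K) + 1 ≠ 0 := Nat.cast_add_one_ne_zero s
  have hr1 : (r : K) + 1 ≠ 0 := Nat.cast_add_one_ne_zero r
  have hr2 : (r : K) + 2 ≠ 0 := by exact_mod_cast Nat.succ_ne_zero (r + 1)
  rw [div_add_div _ _ hr2 hr1, div_eq_div_iff hs (mul_ne_zero hr2 hr1)]
  linear_combination h3 * ((r : K) + 1) * (r + 2) - (r + 2) * h1 - (r + 1) * h2

def alternatingMoment {R : Type*} [CommRing R] (L : ℕ) (β : ℕ → R) (k : ℕ) : R :=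
  ∑ s ∈ range L, (-1) ^ s * β (s + 1) * s.choose k

def boijSoderbergCoeff {K : Type*} [Field K] (L : ℕ) (β : ℕ → K) (i : ℕ) : K :=
  ∑ j ∈ Icc 1 L, β j * ((-1) ^ (j + i) * (1 / (j : K)) * (j + 1).choose (i + 1))

theorem boijSoderbergCoeff_succ {K : Type*} [Field K] [CharZero K] (L : ℕ) (β : ℕ → K)
    (r : ℕ) :
    boijSoderbergCoeff L β (r + 1) =
      (-1) ^ r * (alternatingMoment L β r / (r + 1) + alternatingMoment L β (r + 1) / (r + 2)) := by
  have hIcc : Icc 1 L = Ico (0 + 1) (L + 1) := by ext; simp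
  rw [boijSoderbergCoeff, hIcc, ← sum_Ico_add', ← range_eq_Ico, alternatingMoment,
    alternatingMoment, sum_div, sum_div, ← sum_add_distrib, mul_sum]
  refine sum_congr rfl fun s _ => ?_
  have h := cast_choose_add_two_div (K := K) s r
  push_cast
  linear_combination β (s + 1) * (-1) ^ s * (-1) ^ r * h

def truncMin (N m k : ℕ) : ℕ := if k < N then min (k + 1) m else 0

theorem truncMin_of_lt_of_lt {N m k : ℕ} (hkN : k < N) (hkm : k < m) :
    truncMin N m k = k + 1 := by
  simp [truncMin, hkN, hkm]

theorem truncMin_of_lt_of_le {N m k : ℕ} (hkN : k < N) (hmk : m ≤ k + 1) :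
    truncMin N m k = m := by
  simp [truncMin, hkN, hmk]

theorem truncMin_of_le {N m k : ℕ} (hNk : N ≤ k) : truncMin N m k = 0 := by
  simp [truncMin, hNk.not_gt]

theorem alternatingMoment_boothLueker {R : Type*} [CommRing R] {m N L : ℕ} (hNL : N ≤ L)
    (hmL : m ≤ L) (hmN : m ≤ N + 1) (k : ℕ) :
    alternatingMoment L (fun j => (m : R) * N.choose j - m.choose (j + 1)) k =
      (-1) ^ k * (truncMin N m k : R) := by
  have hsplit : alternatingMoment L (fun j => (m : R) * N.choose j - m.choose (j + 1)) k =
      m * ∑ s ∈ range L, (-1 : R) ^ s * N.choose (s + 1) * s.choose k -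
        ∑ s ∈ range L, (-1 : R) ^ s * m.choose (s + 2) * s.choose k := by
    rw [alternatingMoment, mul_sum, ← sum_sub_distrib]
    exact sum_congr rfl fun s _ => by ring
  rw [hsplit, sum_range_neg_one_pow_mul_choose_succ_mul_choose hNL,
    sum_range_neg_one_pow_mul_choose_add_two_mul_choose hmL, truncMin]
  split_ifs with hk
  · rw [show min (k + 1) m = m - (m - 1 - k) by omega, Nat.cast_sub (by omega : m - 1 - k ≤ m)]
    ring
  · rw [show m - 1 - k = 0 by omega]
    simp

theorem boijSoderbergCoeff_boothLueker {K : Type*} [Field K] [CharZero K] {m N L : ℕ}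
    (hNL : N ≤ L) (hmL : m ≤ L) (hmN : m ≤ N + 1) (r : ℕ) :
    boijSoderbergCoeff L (fun j => (m : K) * N.choose j - m.choose (j + 1)) (r + 1) =
      truncMin N m r / (r + 1) - truncMin N m (r + 1) / (r + 2) := by
  rw [boijSoderbergCoeff_succ, alternatingMoment_boothLueker hNL hmL hmN,
    alternatingMoment_boothLueker hNL hmL hmN]
  have hsign : (-1 : K) ^ r * (-1) ^ r = 1 := by rw [← mul_pow]; simp
  linear_combination (truncMin N m r / ((r : K) + 1) - truncMin N m (r + 1) / (r + 2)) * hsign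

theorem pattern_of_eq_truncMin_div_sub {K : Type*} [Field K] [CharZero K] {m N : ℕ}
    (hm : 1 ≤ m) (hmN : m ≤ N) {c : ℕ → K}
    (hc : ∀ r, c (r + 1) = truncMin N m r / (r + 1) - truncMin N m (r + 1) / (r + 2)) :
    (∀ i, 1 ≤ i → i < m → c i = 0) ∧ (∀ i, m ≤ i → i < N → c i = m / (i * (i + 1))) ∧
      c N = m / N ∧ ∀ i, N < i → c i = 0 := by
  have hr1 (r : ℕ) : (r : K) + 1 ≠ 0 := Nat.cast_add_one_ne_zero r
  have hr2 (r : ℕ) : (r : K) + 2 ≠ 0 := by exact_mod_cast Nat.succ_ne_zero (r + 1)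
  refine ⟨fun i hi him => ?_, fun i hmi hiN => ?_, ?_, fun i hNi => ?_⟩
  · obtain ⟨r, rfl⟩ := Nat.exists_eq_add_of_le' hi
    rw [hc, truncMin_of_lt_of_lt (by omega) (by omega), truncMin_of_lt_of_lt (by omega) him]
    push_cast
    rw [div_self (hr1 r), add_assoc, one_add_one_eq_two, div_self (hr2 r), sub_self]
  · obtain ⟨r, rfl⟩ := Nat.exists_eq_add_of_le' (hm.trans hmi)
    rw [hc, truncMin_of_lt_of_le (by omega) (by omega), truncMin_of_lt_of_le hiN (by omega)]
    push_cast
    rw [add_assoc, one_add_one_eq_two, div_sub_div _ _ (hr1 r) (hr2 r)]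
    ring
  · obtain ⟨r, rfl⟩ := Nat.exists_eq_add_of_le' (hm.trans hmN)
    rw [hc, truncMin_of_lt_of_le (by omega) (by omega), truncMin_of_le le_rfl]
    push_cast
    ring
  · obtain ⟨r, rfl⟩ := Nat.exists_eq_add_of_le' (Nat.one_le_of_lt hNi)
    rw [hc, truncMin_of_le (by omega), truncMin_of_le (by omega)]
    simp

theorem le_choose_two_cases {m n : ℕ} (h : m ≤ n.choose 2) :
    (m = 0 ∨ m = 1 ∧ n = 2) ∨ 1 ≤ m ∧ 3 ≤ n := by
  rcases n with _ | _ | _ | n <;> simp [Nat.choose_two_right] at h ⊢ <;> omega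

theorem boij_soderberg_compl_boothLueker_general {V : Type*} [Fintype V]
    (G : SimpleGraph V) [DecidableRel G.Adj]
    (n m : ℕ) (hn : n = Fintype.card V) (hm : m = G.edgeFinset.card)
    (β : ℕ → ℚ)
    (hβ : ∀ j, β j = (m : ℚ) * ((m + n - 3).choose j : ℚ) - (m.choose (j + 1) : ℚ))
    (c : ℕ → ℚ)
    (hc : ∀ i, c i = ∑ j ∈ Finset.Icc 1 (n + m - 1),
        β j * ((-1 : ℚ) ^ (j + i) * (1 / (j : ℚ)) * ((j + 1).choose (i + 1) : ℚ))) :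
    (∀ i, 1 ≤ i → i < m → c i = 0) ∧
    (∀ i, m ≤ i → i ≤ m + n - 4 → c i = (m : ℚ) / ((i : ℚ) * ((i : ℚ) + 1))) ∧
    c (m + n - 3) = (m : ℚ) / ((m : ℚ) + (n : ℚ) - 3) ∧
    (∀ i, m + n - 3 < i → c i = 0) := by
  have hβfun : β = fun j => (m : ℚ) * (m + n - 3).choose j - m.choose (j + 1) := funext hβ
  have hc' (i : ℕ) : c i = boijSoderbergCoeff (n + m - 1) β i := hc i
  rcases le_choose_two_cases (hm ▸ hn ▸ G.card_edgeFinset_le_card_choose_two) with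
    hdeg | ⟨hm1, hn3⟩
  · have hβ0 : ∀ j, β j = 0 := by
      rcases hdeg with rfl | ⟨rfl, rfl⟩ <;> intro j <;>
        rcases j with _ | j <;> simp [hβ, Nat.choose_eq_zero_of_lt]
    have hc0 : ∀ i, c i = 0 := fun i => by simp [hc, hβ0]
    rcases hdeg with rfl | ⟨rfl, rfl⟩
    · simp [hc0]
    · exact ⟨fun i _ _ => hc0 i, fun i _ _ => by omega, by norm_num [hc0], fun i _ => hc0 i⟩
  · have hcw (r : ℕ) : c (r + 1) = truncMin (m + n - 3) m r / (r + 1)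
        - truncMin (m + n - 3) m (r + 1) / (r + 2) := by
      rw [hc', hβfun]
      exact boijSoderbergCoeff_boothLueker (by omega) (by omega) (by omega) r
    obtain ⟨hlow, hmid, htop, hhigh⟩ := pattern_of_eq_truncMin_div_sub hm1 (by omega) hcw
    refine ⟨hlow, fun i hmi hi => hmid i hmi (by omega), ?_, hhigh⟩
    rw [htop, Nat.cast_sub (by omega : 3 ≤ m + n)]
    push_cast
    rfl

/-- Let `G` be a graph with `n` vertices and `m` edges.  The Boij–Söderberg coefficients
of the edge ideal of the complement of `BL(G)` — obtained from the Betti numbers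
`β_j = m·binom(m+n−3, j) − binom(m, j+1)` via
`c_i = ∑_j β_j (−1)^{j−i} (1/j) binom(j+1, i+1)` — satisfy: `c_i = 0` for `i < m`,
`c_i = m/(i(i+1))` for `m ≤ i ≤ m+n−4`, `c_{m+n−3} = m/(m+n−3)`, and `c_i = 0` for
`i > m+n−3`. -/
theorem boij_soderberg_compl_boothLueker {V : Type*} [Fintype V] [DecidableEq V]
    (G : SimpleGraph V) [DecidableRel G.Adj]
    (n m : ℕ) (hn : n = Fintype.card V) (hm : m = G.edgeFinset.card)
    (β : ℕ → ℚ)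
    (hβ : ∀ j, β j = (m : ℚ) * ((m + n - 3).choose j : ℚ) - (m.choose (j + 1) : ℚ))
    (c : ℕ → ℚ)
    (hc : ∀ i, c i = ∑ j ∈ Finset.Icc 1 (n + m - 1),
        β j * ((-1 : ℚ) ^ (j + i) * (1 / (j : ℚ)) * ((j + 1).choose (i + 1) : ℚ))) :
    (∀ i, 1 ≤ i → i < m → c i = 0) ∧
    (∀ i, m ≤ i → i ≤ m + n - 4 → c i = (m : ℚ) / ((i : ℚ) * ((i : ℚ) + 1))) ∧
    c (m + n - 3) = (m : ℚ) / ((m : ℚ) + (n : ℚ) - 3) ∧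
    (∀ i, m + n - 3 < i → c i = 0) :=
  boij_soderberg_compl_boothLueker_general G n m hn hm β hβ c hc
end
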